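/- (Main convergence theorem.) In the setting of the algorithm described in the context, the sequence (x^k)_{k∈ℕ} converges to some point x̃ ∈ S* ∩ X; in particular x̃ satisfies −A_i(x̃) ∈ B_i(x̃) for every i ∈ {1,…,m}. -/

import Mathlib

/-!
Every solution `w ∈ S* ∩ X` lies in each halfspace `H_i^k` (monotonicity of `A_i + B_i`), so
both projections of an inner step are Fejér with respect to `w`:
`‖z_{i+1} - w‖² + ‖z_{i+1} - p_i‖² + ‖p_i - z_i‖² ≤ ‖z_i - w‖²`. Hence `(x^k)` is bounded and
all inner steps tend to zero. So does `z_i^k - J_i^k`. With `v = A_i(x̄) + ū` bounded, the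
halfspace cuts `z` off from `x̄` by `α ⟪v, z - J⟫ / ‖v‖ ≥ α δ ‖z - J‖² / (β ‖v‖)`, so
`α ‖z - J‖ → 0`; when `α < θ` the test failed at the trial point `y = z + (α/θ)(J - z)`, and
monotonicity of `B_i` between `y` and the resolvent point `J` turns that failure into
`(1 - δ) ‖z - J‖ ≤ β ‖A z - A y‖`, where `y - z → 0`. Consequently every cluster point of `(x^k)`
solves all inclusions (closed graph of `B_i`), and Fejér monotonicity upgrades subsequential
convergence to convergence.
-/

open scoped RealInnerProductSpace
open Filter

/-- `T` is a monotone set-valued operator. -/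
def IsMonotoneOp {n : ℕ}
    (T : EuclideanSpace ℝ (Fin n) → Set (EuclideanSpace ℝ (Fin n))) : Prop :=
  ∀ x y u v, u ∈ T x → v ∈ T y → ⟪x - y, u - v⟫ ≥ 0

/-- `T` is a maximal monotone set-valued operator. -/
def IsMaximalMonotoneOp {n : ℕ}
    (T : EuclideanSpace ℝ (Fin n) → Set (EuclideanSpace ℝ (Fin n))) : Prop :=
  IsMonotoneOp T ∧
    ∀ x u, (∀ y v, v ∈ T y → ⟪x - y, u - v⟫ ≥ 0) → u ∈ T x

open Topology Uniformity Metric Set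

section InnerProductSpace

variable {F : Type*} [NormedAddCommGroup F] [InnerProductSpace ℝ F]

theorem convex_setOf_inner_sub_nonpos (v c : F) : Convex ℝ {y : F | ⟪v, y - c⟫ ≤ 0} := by
  simpa only [inner_sub_right, sub_nonpos, innerₛₗ_apply_apply] using
    convex_halfSpace_le (innerₛₗ ℝ v).isLinear ⟪v, c⟫

theorem norm_sub_sq_add_norm_sub_sq_le {K : Set F} (hK : Convex ℝ K) {s q w : F} (hq : q ∈ K)
    (hmin : ∀ y ∈ K, ‖q - s‖ ≤ ‖y - s‖) (hw : w ∈ K) :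
    ‖q - w‖ ^ 2 + ‖q - s‖ ^ 2 ≤ ‖s - w‖ ^ 2 := by
  have hinf : ‖s - q‖ = ⨅ y : K, ‖s - y‖ := by
    refine (IsMinOn.iInf_eq (f := fun y => ‖s - y‖) hq (isMinOn_iff.2 fun y hy => ?_)).symm
    simpa only [norm_sub_rev s] using hmin y hy
  have hobtuse := (norm_eq_iInf_iff_real_inner_le_zero hK hq).1 hinf w hw
  have hexpand : ‖s - w‖ ^ 2 = ‖s - q‖ ^ 2 - 2 * ⟪s - q, w - q⟫ + ‖w - q‖ ^ 2 := by
    rw [← norm_sub_sq_real, sub_sub_sub_cancel_right]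
  rw [norm_sub_rev q w, norm_sub_rev q s]
  linarith

theorem mul_inner_le_norm_mul_norm_sub {v z J c p : F} {a : ℝ} (hc : c = a • J + (1 - a) • z)
    (hp : ⟪v, p - c⟫ ≤ 0) : a * ⟪v, z - J⟫ ≤ ‖v‖ * ‖p - z‖ := by
  have hsplit : a * ⟪v, z - J⟫ = ⟪v, z - p⟫ + ⟪v, p - c⟫ := by
    rw [← inner_add_right, ← inner_smul_right, hc]
    congr 1
    module
  rw [hsplit, norm_sub_rev p z]
  linarith [real_inner_le_norm v (z - p)]

end InnerProductSpace

theorem inv_smul_sub_smul_sub {K V : Type*} [Field K] [AddCommGroup V] [Module K V] {β : K}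
    (hβ : β ≠ 0) (z a J : V) : β⁻¹ • (z - β • a - J) = β⁻¹ • (z - J) - a := by
  rw [sub_right_comm, smul_sub, inv_smul_smul₀ hβ]

theorem tendsto_zero_of_sq_le {ι : Type*} {l : Filter ι} {f g : ι → ℝ} (hf : ∀ k, 0 ≤ f k)
    (hfg : ∀ k, f k ^ 2 ≤ g k) (hg : Tendsto g l (𝓝 0)) : Tendsto f l (𝓝 0) := by
  refine squeeze_zero hf (fun k => (le_abs_self _).trans (Real.abs_le_sqrt (hfg k))) ?_
  simpa using hg.sqrt

theorem Antitone.tendsto_sub_succ {e : ℕ → ℝ} (he : Antitone e) (hbdd : BddBelow (range e)) :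
    Tendsto (fun k => e k - e (k + 1)) atTop (𝓝 0) := by
  have h := tendsto_atTop_ciInf he hbdd
  simpa using h.sub (h.comp (tendsto_add_atTop_nat 1))

theorem Continuous.tendsto_sub_of_tendsto_sub {ι E G : Type*} [NormedAddCommGroup E]
    [ProperSpace E] [SeminormedAddCommGroup G] {f : E → G} (hf : Continuous f) {l : Filter ι}
    {x y : ι → E} {c : E} {r : ℝ} (hx : ∀ k, x k ∈ closedBall c r)
    (hxy : Tendsto (fun k => y k - x k) l (𝓝 0)) :
    Tendsto (fun k => f (y k) - f (x k)) l (𝓝 0) := by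
  set K := closedBall c (r + 1)
  have huc : UniformContinuousOn f K :=
    (isCompact_closedBall c (r + 1)).uniformContinuousOn_of_continuous hf.continuousOn
  have hxK : ∀ k, x k ∈ K := fun k => closedBall_subset_closedBall (by linarith) (hx k)
  have hyK : ∀ᶠ k in l, y k ∈ K := by
    filter_upwards [(tendsto_zero_iff_norm_tendsto_zero.1 hxy).eventually (gt_mem_nhds one_pos)]
      with k hk
    rw [← dist_eq_norm] at hk
    rw [mem_closedBall]
    linarith [dist_triangle (y k) (x k) c, mem_closedBall.1 (hx k)]
  have hpair : Tendsto (fun k => (y k, x k)) l (𝓤 E ⊓ 𝓟 (K ×ˢ K)) := by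
    refine tendsto_inf.2 ⟨tendsto_uniformity_iff_dist_tendsto_zero.2 ?_, ?_⟩
    · simpa only [dist_eq_norm] using tendsto_zero_iff_norm_tendsto_zero.1 hxy
    · exact tendsto_principal.2 (hyK.mono fun k hk => ⟨hk, hxK k⟩)
  rw [tendsto_zero_iff_norm_tendsto_zero]
  simpa only [dist_eq_norm, Function.comp_def] using
    tendsto_uniformity_iff_dist_tendsto_zero.1 (Tendsto.comp huc hpair)

theorem tendsto_of_antitone_dist_of_tendsto_comp {α : Type*} [PseudoMetricSpace α] {x : ℕ → α}
    {a : α} (hanti : Antitone fun k => dist (x k) a) {φ : ℕ → ℕ}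
    (hlim : Tendsto (x ∘ φ) atTop (𝓝 a)) : Tendsto x atTop (𝓝 a) := by
  rw [Metric.tendsto_atTop] at hlim ⊢
  intro ε hε
  obtain ⟨N, hN⟩ := hlim ε hε
  exact ⟨φ N, fun k hk => (hanti hk).trans_lt (hN N le_rfl)⟩

section MonotoneOperator

variable {n : ℕ}

local notation "E" => EuclideanSpace ℝ (Fin n)

theorem IsMaximalMonotoneOp.mem_of_tendsto {B : E → Set E} (hB : IsMaximalMonotoneOp B)
    {ι : Type*} {l : Filter ι} [l.NeBot] {y u : ι → E} {y₀ u₀ : E} (hy : Tendsto y l (𝓝 y₀))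
    (hu : Tendsto u l (𝓝 u₀)) (hmem : ∀ᶠ k in l, u k ∈ B (y k)) : u₀ ∈ B y₀ := by
  refine hB.2 y₀ u₀ fun y' v hv => ?_
  exact ge_of_tendsto ((hy.sub tendsto_const_nhds).inner (hu.sub tendsto_const_nhds))
    (hmem.mono fun k hk => hB.1 _ _ _ _ hk hv)

theorem IsMonotoneOp.inner_add_sub_nonpos {B : E → Set E} (hB : IsMonotoneOp B) {A : E → E}
    (hA : ∀ x y, ⟪A x - A y, x - y⟫ ≥ 0) {w y u : E} (hw : -A w ∈ B w) (hu : u ∈ B y) :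
    ⟪A y + u, w - y⟫ ≤ 0 := by
  have hBwy := hB _ _ _ _ hu hw
  have hAwy := hA y w
  calc ⟪A y + u, w - y⟫ = -(⟪y - w, u - -A w⟫ + ⟪A y - A w, y - w⟫) := by
        rw [real_inner_comm (u - -A w) (y - w), ← inner_add_left, ← inner_neg_right, neg_sub]
        congr 1
        abel
    _ ≤ 0 := by linarith

/-- The resolvent `(I + β B)⁻¹` of a monotone operator is nonexpansive. -/
theorem IsMonotoneOp.norm_sub_le_of_inv_smul_sub_mem {B : E → Set E} (hB : IsMonotoneOp B)
    {β : ℝ} (hβ : 0 < β) {a b J K : E} (ha : β⁻¹ • (a - J) ∈ B J) (hb : β⁻¹ • (b - K) ∈ B K) :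
    ‖J - K‖ ≤ ‖a - b‖ := by
  have hmono : 0 ≤ β⁻¹ * (⟪J - K, a - b⟫ - ‖J - K‖ ^ 2) := by
    have h := hB _ _ _ _ ha hb
    rwa [← smul_sub, inner_smul_right, show a - J - (b - K) = (a - b) - (J - K) by abel,
      inner_sub_right, real_inner_self_eq_norm_sq] at h
  have hcs := real_inner_le_norm (J - K) (a - b)
  have hsq : ‖J - K‖ ^ 2 ≤ ‖J - K‖ * ‖a - b‖ := by
    nlinarith [(mul_nonneg_iff_of_pos_left (inv_pos.2 hβ)).1 hmono]
  nlinarith [norm_nonneg (J - K), norm_nonneg (a - b)]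

theorem IsMonotoneOp.one_sub_mul_norm_sub_le {B : E → Set E} (hB : IsMonotoneOp B) {A : E → E}
    {β δ t : ℝ} (hβ : 0 < β) (ht : t < 1) {z J u : E}
    (hJ : β⁻¹ • (z - β • A z - J) ∈ B J) (hu : u ∈ B (t • J + (1 - t) • z))
    (hfail : ⟪A (t • J + (1 - t) • z) + u, z - J⟫ < δ / β * ‖z - J‖ ^ 2) :
    (1 - δ) * ‖z - J‖ ≤ β * ‖A z - A (t • J + (1 - t) • z)‖ := by
  set y := t • J + (1 - t) • z
  have hres : 0 ≤ ⟪z - J, u⟫ + ⟪z - J, A z⟫ - β⁻¹ * ‖z - J‖ ^ 2 := by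
    have h := hB _ _ _ _ hu hJ
    rw [show y - J = (1 - t) • (z - J) by module, inner_smul_left, conj_trivial,
      inv_smul_sub_smul_sub hβ.ne',
      show u - (β⁻¹ • (z - J) - A z) = (u + A z) - β⁻¹ • (z - J) by abel,
      inner_sub_right, inner_add_right, inner_smul_right, real_inner_self_eq_norm_sq] at h
    exact (mul_nonneg_iff_of_pos_left (sub_pos.2 ht)).1 h
  rw [inner_add_left, real_inner_comm (z - J) (A y), real_inner_comm (z - J) u] at hfail
  have hgap : (1 - δ) * ‖z - J‖ ^ 2 < β * ⟪z - J, A z - A y⟫ := by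
    rw [inner_sub_right]
    rw [div_mul_eq_mul_div, lt_div_iff₀ hβ] at hfail
    have hβinv : β * (β⁻¹ * ‖z - J‖ ^ 2) = ‖z - J‖ ^ 2 := by field_simp
    nlinarith
  have hcs := real_inner_le_norm (z - J) (A z - A y)
  have hpos : 0 < ‖z - J‖ := by
    rcases (norm_nonneg (z - J)).eq_or_lt with h0 | h0
    · rw [← h0] at hgap hcs
      nlinarith
    · exact h0
  nlinarith

end MonotoneOperator

section Algorithm

variable {n : ℕ}

local notation "E" => EuclideanSpace ℝ (Fin n)

variable (n) in
/-- `z k i` stands for `z_i^k`, and `p k i` for `P_{H_i^k}(z_i^k)`. -/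
structure SplittingRun (m : ℕ) where
  A : ℕ → E → E
  B : ℕ → E → Set E
  X : Set E
  PX : E → E
  θ : ℝ
  δ : ℝ
  βlo : ℝ
  βhi : ℝ
  β : ℕ → ℝ
  R : ℝ
  x : ℕ → E
  z : ℕ → ℕ → E
  J : ℕ → ℕ → E
  xbar : ℕ → ℕ → E
  ubar : ℕ → ℕ → E
  α : ℕ → ℕ → ℝ
  p : ℕ → ℕ → E
  continuous_A : ∀ i ∈ Finset.Icc 1 m, Continuous (A i)
  monotone_A : ∀ i ∈ Finset.Icc 1 m, ∀ x y, ⟪A i x - A i y, x - y⟫ ≥ 0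
  maximal_B : ∀ i ∈ Finset.Icc 1 m, IsMaximalMonotoneOp (B i)
  convex_X : Convex ℝ X
  θ_mem : θ ∈ Set.Ioo (0 : ℝ) 1
  δ_mem : δ ∈ Set.Ioo (0 : ℝ) 1
  βlo_pos : 0 < βlo
  β_mem : ∀ k, β k ∈ Set.Icc βlo βhi
  PX_spec : ∀ w, PX w ∈ X ∧ ∀ y ∈ X, ‖PX w - w‖ ≤ ‖y - w‖
  z_one : ∀ k, z k 1 = x k
  x_succ : ∀ k, x (k + 1) = z k (m + 1)
  α_mem : ∀ k, ∀ i ∈ Finset.Icc 1 m, α k i ∈ Set.Ioc (0 : ℝ) 1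
  J_spec : ∀ k, ∀ i ∈ Finset.Icc 1 m,
    (β k)⁻¹ • (z k i - β k • A i (z k i) - J k i) ∈ B i (J k i)
  of_z_eq_J : ∀ k, ∀ i ∈ Finset.Icc 1 m, z k i = J k i →
    xbar k i = z k i ∧ ubar k i ∈ B i (z k i) ∧ ‖ubar k i‖ ≤ R
  of_z_ne_J : ∀ k, ∀ i ∈ Finset.Icc 1 m, z k i ≠ J k i →
    ∃ j : ℕ, α k i = θ ^ j ∧
      xbar k i = α k i • J k i + (1 - α k i) • z k i ∧
      ubar k i ∈ B i (xbar k i) ∧ ‖ubar k i‖ ≤ R ∧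
      ⟪A i (xbar k i) + ubar k i, z k i - J k i⟫ ≥ (δ / β k) * ‖z k i - J k i‖ ^ 2 ∧
      ∀ j' < j, ∀ u ∈ B i (θ ^ j' • J k i + (1 - θ ^ j') • z k i), ‖u‖ ≤ R →
        ⟪A i (θ ^ j' • J k i + (1 - θ ^ j') • z k i) + u, z k i - J k i⟫ <
          (δ / β k) * ‖z k i - J k i‖ ^ 2
  exists_mem_B : ∀ k, ∀ i ∈ Finset.Icc 1 m, ∀ j : ℕ,
    ∃ u ∈ B i (θ ^ j • J k i + (1 - θ ^ j) • z k i), ‖u‖ ≤ R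
  p_spec : ∀ k, ∀ i ∈ Finset.Icc 1 m,
    p k i ∈ {y : E | ⟪A i (xbar k i) + ubar k i, y - xbar k i⟫ ≤ 0} ∧
      ∀ y ∈ {y : E | ⟪A i (xbar k i) + ubar k i, y - xbar k i⟫ ≤ 0},
        ‖p k i - z k i‖ ≤ ‖y - z k i‖
  z_succ : ∀ k, ∀ i ∈ Finset.Icc 1 m, z k (i + 1) = PX (p k i)

namespace SplittingRun

variable {m : ℕ} (r : SplittingRun n m)

def solutions : Set E := {w | ∀ i ∈ Finset.Icc 1 m, -r.A i w ∈ r.B i w}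

theorem β_pos (k : ℕ) : 0 < r.β k := r.βlo_pos.trans_le (r.β_mem k).1

theorem ubar_mem (k : ℕ) {i : ℕ} (hi : i ∈ Finset.Icc 1 m) :
    r.ubar k i ∈ r.B i (r.xbar k i) ∧ ‖r.ubar k i‖ ≤ r.R := by
  by_cases h : r.z k i = r.J k i
  · obtain ⟨hxbar, hubar⟩ := r.of_z_eq_J k i hi h
    rwa [hxbar]
  · obtain ⟨j, -, -, hubar, hR, -⟩ := r.of_z_ne_J k i hi h
    exact ⟨hubar, hR⟩

theorem norm_z_succ_sub_sq_add_le {w : E} (hw : w ∈ r.solutions ∩ r.X) (k : ℕ) {i : ℕ}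
    (hi : i ∈ Finset.Icc 1 m) :
    ‖r.z k (i + 1) - w‖ ^ 2 + (‖r.z k (i + 1) - r.p k i‖ ^ 2 + ‖r.p k i - r.z k i‖ ^ 2) ≤
      ‖r.z k i - w‖ ^ 2 := by
  have hH : ⟪r.A i (r.xbar k i) + r.ubar k i, w - r.xbar k i⟫ ≤ 0 :=
    (r.maximal_B i hi).1.inner_add_sub_nonpos (r.monotone_A i hi) (hw.1 i hi)
      (r.ubar_mem k hi).1
  have hproj_H := norm_sub_sq_add_norm_sub_sq_le (convex_setOf_inner_sub_nonpos _ _)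
    (r.p_spec k i hi).1 (r.p_spec k i hi).2 hH
  have hproj_X := norm_sub_sq_add_norm_sub_sq_le r.convex_X (r.PX_spec (r.p k i)).1
    (r.PX_spec (r.p k i)).2 hw.2
  rw [← r.z_succ k i hi] at hproj_X
  linarith

theorem norm_z_sub_le {w : E} (hw : w ∈ r.solutions ∩ r.X) (k : ℕ) {i j : ℕ} (hi : 1 ≤ i)
    (hij : i ≤ j) (hj : j ≤ m + 1) : ‖r.z k j - w‖ ≤ ‖r.z k i - w‖ := by
  induction j, hij using Nat.le_induction with
  | base => exact le_rfl
  | succ j hij ih =>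
    have hstep := r.norm_z_succ_sub_sq_add_le hw k (i := j)
      (Finset.mem_Icc.2 ⟨by omega, by omega⟩)
    refine le_trans ?_ (ih (by omega))
    exact (pow_le_pow_iff_left₀ (norm_nonneg _) (norm_nonneg _) two_ne_zero).1
      (by linarith [sq_nonneg ‖r.z k (j + 1) - r.p k j‖, sq_nonneg ‖r.p k j - r.z k j‖])

theorem norm_x_succ_sub_le {w : E} (hw : w ∈ r.solutions ∩ r.X) (k : ℕ) :
    ‖r.x (k + 1) - w‖ ≤ ‖r.x k - w‖ := by
  rw [r.x_succ, ← r.z_one]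
  exact r.norm_z_sub_le hw k le_rfl (by omega) le_rfl

theorem z_mem_closedBall {w : E} (hw : w ∈ r.solutions ∩ r.X) (k : ℕ) {i : ℕ} (hi : 1 ≤ i)
    (him : i ≤ m + 1) : r.z k i ∈ closedBall w ‖r.x 0 - w‖ := by
  rw [mem_closedBall, dist_eq_norm]
  calc ‖r.z k i - w‖ ≤ ‖r.z k 1 - w‖ := r.norm_z_sub_le hw k le_rfl hi him
    _ = ‖r.x k - w‖ := by rw [r.z_one]
    _ ≤ ‖r.x 0 - w‖ :=
      antitone_nat_of_succ_le (f := fun k => ‖r.x k - w‖) (r.norm_x_succ_sub_le hw)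
        (Nat.zero_le k)

theorem sq_add_sq_le_sq_sub_sq {w : E} (hw : w ∈ r.solutions ∩ r.X) (k : ℕ) {i : ℕ}
    (hi : i ∈ Finset.Icc 1 m) :
    ‖r.z k (i + 1) - r.p k i‖ ^ 2 + ‖r.p k i - r.z k i‖ ^ 2 ≤
      ‖r.x k - w‖ ^ 2 - ‖r.x (k + 1) - w‖ ^ 2 := by
  obtain ⟨hi1, him⟩ := Finset.mem_Icc.1 hi
  have hlast : ‖r.x (k + 1) - w‖ ≤ ‖r.z k (i + 1) - w‖ := by
    rw [r.x_succ]
    exact r.norm_z_sub_le hw k (by omega) (by omega) le_rfl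
  have hfirst : ‖r.z k i - w‖ ≤ ‖r.x k - w‖ := by
    rw [← r.z_one]
    exact r.norm_z_sub_le hw k le_rfl hi1 (by omega)
  nlinarith [r.norm_z_succ_sub_sq_add_le hw k hi, pow_le_pow_left₀ (norm_nonneg _) hlast 2,
    pow_le_pow_left₀ (norm_nonneg _) hfirst 2]

theorem tendsto_norm_sq_sub_norm_sq {w : E} (hw : w ∈ r.solutions ∩ r.X) :
    Tendsto (fun k => ‖r.x k - w‖ ^ 2 - ‖r.x (k + 1) - w‖ ^ 2) atTop (𝓝 0) :=
  Antitone.tendsto_sub_succ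
    (antitone_nat_of_succ_le fun k =>
      pow_le_pow_left₀ (norm_nonneg _) (r.norm_x_succ_sub_le hw k) 2)
    ⟨0, by rintro _ ⟨k, rfl⟩; positivity⟩

theorem tendsto_norm_p_sub_z {w : E} (hw : w ∈ r.solutions ∩ r.X) {i : ℕ}
    (hi : i ∈ Finset.Icc 1 m) : Tendsto (fun k => ‖r.p k i - r.z k i‖) atTop (𝓝 0) :=
  tendsto_zero_of_sq_le (fun _ => norm_nonneg _)
    (fun k => by linarith [r.sq_add_sq_le_sq_sub_sq hw k hi, sq_nonneg ‖r.z k (i + 1) - r.p k i‖])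
    (r.tendsto_norm_sq_sub_norm_sq hw)

theorem tendsto_z_succ_sub_z {w : E} (hw : w ∈ r.solutions ∩ r.X) {i : ℕ}
    (hi : i ∈ Finset.Icc 1 m) : Tendsto (fun k => r.z k (i + 1) - r.z k i) atTop (𝓝 0) := by
  have hzp : Tendsto (fun k => ‖r.z k (i + 1) - r.p k i‖) atTop (𝓝 0) :=
    tendsto_zero_of_sq_le (fun _ => norm_nonneg _)
      (fun k => by linarith [r.sq_add_sq_le_sq_sub_sq hw k hi, sq_nonneg ‖r.p k i - r.z k i‖])
      (r.tendsto_norm_sq_sub_norm_sq hw)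
  rw [tendsto_zero_iff_norm_tendsto_zero]
  refine squeeze_zero (fun _ => norm_nonneg _) (fun k => ?_)
    (by simpa using hzp.add (r.tendsto_norm_p_sub_z hw hi))
  rw [← sub_add_sub_cancel (r.z k (i + 1)) (r.p k i)]
  exact norm_add_le _ _

theorem norm_J_sub_le {w : E} (hw : w ∈ r.solutions) {i : ℕ} (hi : i ∈ Finset.Icc 1 m)
    (k : ℕ) : ‖r.J k i - w‖ ≤ ‖r.z k i - w‖ + r.βhi * (‖r.A i (r.z k i)‖ + ‖r.A i w‖) := by
  have hβ := r.β_pos k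
  have hres : (r.β k)⁻¹ • ((w - r.β k • r.A i w) - w) ∈ r.B i w := by
    rw [sub_sub_cancel_left, smul_neg, inv_smul_smul₀ hβ.ne']
    exact hw i hi
  calc ‖r.J k i - w‖
      ≤ ‖(r.z k i - r.β k • r.A i (r.z k i)) - (w - r.β k • r.A i w)‖ :=
        (r.maximal_B i hi).1.norm_sub_le_of_inv_smul_sub_mem hβ (r.J_spec k i hi) hres
    _ = ‖(r.z k i - w) - r.β k • (r.A i (r.z k i) - r.A i w)‖ := by
        rw [smul_sub]
        congr 1
        abel
    _ ≤ ‖r.z k i - w‖ + r.β k * (‖r.A i (r.z k i)‖ + ‖r.A i w‖) := by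
        refine (norm_sub_le _ _).trans ?_
        rw [norm_smul, Real.norm_of_nonneg hβ.le]
        gcongr
        exact norm_sub_le _ _
    _ ≤ ‖r.z k i - w‖ + r.βhi * (‖r.A i (r.z k i)‖ + ‖r.A i w‖) := by
        gcongr
        exact (r.β_mem k).2

theorem exists_z_J_mem_closedBall {w : E} (hw : w ∈ r.solutions ∩ r.X) {i : ℕ}
    (hi : i ∈ Finset.Icc 1 m) : ∃ ρ, ∀ k, r.z k i ∈ closedBall w ρ ∧ r.J k i ∈ closedBall w ρ := by
  obtain ⟨hi1, him⟩ := Finset.mem_Icc.1 hi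
  set ρ₀ := ‖r.x 0 - w‖
  have hz k : r.z k i ∈ closedBall w ρ₀ := r.z_mem_closedBall hw k hi1 (by omega)
  obtain ⟨M, hM⟩ := (isCompact_closedBall w ρ₀).exists_bound_of_continuousOn
    (r.continuous_A i hi).continuousOn
  have hβhi : 0 ≤ r.βhi := (r.β_pos 0).le.trans (r.β_mem 0).2
  have hM₀ : 0 ≤ M := (norm_nonneg _).trans (hM w (mem_closedBall_self (norm_nonneg _)))
  refine ⟨ρ₀ + r.βhi * (M + ‖r.A i w‖), fun k => ⟨closedBall_subset_closedBall ?_ (hz k), ?_⟩⟩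
  · linarith [mul_nonneg hβhi (add_nonneg hM₀ (norm_nonneg (r.A i w)))]
  rw [mem_closedBall, dist_eq_norm]
  refine (r.norm_J_sub_le hw.1 hi k).trans ?_
  have := mem_closedBall_iff_norm.1 (hz k)
  gcongr
  exact hM _ (hz k)

theorem xbar_mem_closedBall {w : E} {ρ : ℝ} {i : ℕ} (hi : i ∈ Finset.Icc 1 m)
    (hρ : ∀ k, r.z k i ∈ closedBall w ρ ∧ r.J k i ∈ closedBall w ρ) (k : ℕ) :
    r.xbar k i ∈ closedBall w ρ := by
  by_cases h : r.z k i = r.J k i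
  · rw [(r.of_z_eq_J k i hi h).1]
    exact (hρ k).1
  · obtain ⟨j, -, hxbar, -⟩ := r.of_z_ne_J k i hi h
    have hα := r.α_mem k i hi
    rw [hxbar]
    exact convex_closedBall w ρ (hρ k).2 (hρ k).1 hα.1.le (sub_nonneg.2 hα.2) (by ring)

theorem sq_mul_norm_sub_le {i : ℕ} (hi : i ∈ Finset.Icc 1 m) (k : ℕ) {C : ℝ}
    (hC : ‖r.A i (r.xbar k i) + r.ubar k i‖ ≤ C) :
    (r.α k i * ‖r.z k i - r.J k i‖) ^ 2 ≤ r.βhi / r.δ * C * ‖r.p k i - r.z k i‖ := by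
  have hδ := r.δ_mem.1
  have hβ := r.β_pos k
  have hβhi : 0 ≤ r.βhi := hβ.le.trans (r.β_mem k).2
  have hC₀ : 0 ≤ C := (norm_nonneg _).trans hC
  by_cases h : r.z k i = r.J k i
  · rw [h, sub_self, norm_zero, mul_zero, sq, mul_zero]
    positivity
  obtain ⟨j, -, hxbar, -, -, harmijo, -⟩ := r.of_z_ne_J k i hi h
  have hα := r.α_mem k i hi
  have hdisp := mul_inner_le_norm_mul_norm_sub hxbar (r.p_spec k i hi).1
  calc (r.α k i * ‖r.z k i - r.J k i‖) ^ 2 ≤ r.α k i * ‖r.z k i - r.J k i‖ ^ 2 := by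
        rw [mul_pow]
        exact mul_le_mul_of_nonneg_right (pow_le_of_le_one hα.1.le hα.2 two_ne_zero)
          (sq_nonneg _)
    _ = r.β k / r.δ * (r.α k i * (r.δ / r.β k * ‖r.z k i - r.J k i‖ ^ 2)) := by
        field_simp
    _ ≤ r.β k / r.δ * (r.α k i * ⟪r.A i (r.xbar k i) + r.ubar k i, r.z k i - r.J k i⟫) :=
        mul_le_mul_of_nonneg_left (mul_le_mul_of_nonneg_left harmijo hα.1.le) (by positivity)
    _ ≤ r.β k / r.δ * (‖r.A i (r.xbar k i) + r.ubar k i‖ * ‖r.p k i - r.z k i‖) :=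
        mul_le_mul_of_nonneg_left hdisp (by positivity)
    _ ≤ r.βhi / r.δ * C * ‖r.p k i - r.z k i‖ := by
        rw [mul_assoc]
        exact mul_le_mul (div_le_div_of_nonneg_right (r.β_mem k).2 hδ.le)
          (mul_le_mul_of_nonneg_right hC (norm_nonneg _)) (by positivity)
          (div_nonneg hβhi hδ.le)

theorem norm_z_sub_J_le {i : ℕ} (hi : i ∈ Finset.Icc 1 m) (k : ℕ) :
    ‖r.z k i - r.J k i‖ ≤ r.α k i * ‖r.z k i - r.J k i‖ / r.θ + r.βhi / (1 - r.δ) *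
      ‖r.A i (r.z k i) - r.A i ((r.α k i / r.θ) • r.J k i + (1 - r.α k i / r.θ) • r.z k i)‖ := by
  obtain ⟨hθ, hθ₁⟩ := r.θ_mem
  have hδ₁ := sub_pos.2 r.δ_mem.2
  have hα := r.α_mem k i hi
  have hβ := r.β_pos k
  have hcoef : 0 ≤ r.βhi / (1 - r.δ) := div_nonneg (hβ.le.trans (r.β_mem k).2) hδ₁.le
  by_cases h : r.z k i = r.J k i
  · rw [h, sub_self, norm_zero, mul_zero, zero_div, zero_add]
    exact mul_nonneg hcoef (norm_nonneg _)
  obtain ⟨j, hαj, -, -, -, -, hfail⟩ := r.of_z_ne_J k i hi h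
  rcases le_or_gt r.θ (r.α k i) with hθα | hαθ
  · have : ‖r.z k i - r.J k i‖ ≤ r.α k i * ‖r.z k i - r.J k i‖ / r.θ := by
      rw [le_div_iff₀ hθ, mul_comm]
      gcongr
    linarith [mul_nonneg hcoef (norm_nonneg (r.A i (r.z k i) -
      r.A i ((r.α k i / r.θ) • r.J k i + (1 - r.α k i / r.θ) • r.z k i)))]
  obtain ⟨j', rfl⟩ : ∃ j', j = j' + 1 := Nat.exists_eq_succ_of_ne_zero (by
    rintro rfl
    rw [hαj, pow_zero] at hαθ
    linarith)
  have ht : r.α k i / r.θ = r.θ ^ j' := by rw [hαj, pow_succ, mul_div_cancel_right₀ _ hθ.ne']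
  obtain ⟨u, hu, huR⟩ := r.exists_mem_B k i hi j'
  have hnonexp := (r.maximal_B i hi).1.one_sub_mul_norm_sub_le hβ
    (by rw [← ht, div_lt_one hθ]; exact hαθ) (r.J_spec k i hi) hu
    (hfail j' (Nat.lt_succ_self j') u hu huR)
  rw [ht]
  have : ‖r.z k i - r.J k i‖ ≤ r.βhi / (1 - r.δ) *
      ‖r.A i (r.z k i) - r.A i (r.θ ^ j' • r.J k i + (1 - r.θ ^ j') • r.z k i)‖ := by
    rw [div_mul_eq_mul_div, le_div_iff₀ hδ₁, mul_comm]
    exact hnonexp.trans (by gcongr; exact (r.β_mem k).2)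
  linarith [div_nonneg (mul_nonneg hα.1.le (norm_nonneg (r.z k i - r.J k i))) hθ.le]

theorem tendsto_z_sub_J {w : E} (hw : w ∈ r.solutions ∩ r.X) {i : ℕ}
    (hi : i ∈ Finset.Icc 1 m) : Tendsto (fun k => r.z k i - r.J k i) atTop (𝓝 0) := by
  obtain ⟨ρ, hρ⟩ := r.exists_z_J_mem_closedBall hw hi
  obtain ⟨M, hM⟩ := (isCompact_closedBall w ρ).exists_bound_of_continuousOn
    (r.continuous_A i hi).continuousOn
  have hαd : Tendsto (fun k => r.α k i * ‖r.z k i - r.J k i‖) atTop (𝓝 0) := by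
    refine tendsto_zero_of_sq_le (fun k => mul_nonneg (r.α_mem k i hi).1.le (norm_nonneg _))
      (fun k => r.sq_mul_norm_sub_le hi k ((norm_add_le _ _).trans
        (add_le_add (hM _ (r.xbar_mem_closedBall hi hρ k)) (r.ubar_mem k hi).2))) ?_
    simpa using (r.tendsto_norm_p_sub_z hw hi).const_mul (r.βhi / r.δ * (M + r.R))
  have htrial : Tendsto (fun k => ((r.α k i / r.θ) • r.J k i + (1 - r.α k i / r.θ) • r.z k i) -
      r.z k i) atTop (𝓝 0) := by
    rw [tendsto_zero_iff_norm_tendsto_zero]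
    refine Tendsto.congr (fun k => ?_) (by simpa using hαd.div_const r.θ)
    rw [show (r.α k i / r.θ) • r.J k i + (1 - r.α k i / r.θ) • r.z k i - r.z k i =
      (r.α k i / r.θ) • (r.J k i - r.z k i) by module, norm_smul, norm_sub_rev (r.J k i),
      Real.norm_of_nonneg (div_nonneg (r.α_mem k i hi).1.le r.θ_mem.1.le)]
    ring
  have hA := (r.continuous_A i hi).tendsto_sub_of_tendsto_sub (fun k => (hρ k).1) htrial
  rw [tendsto_zero_iff_norm_tendsto_zero] at hA ⊢
  refine squeeze_zero (fun _ => norm_nonneg _) (fun k => r.norm_z_sub_J_le hi k) ?_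
  simpa [norm_sub_rev] using (hαd.div_const r.θ).add (hA.const_mul (r.βhi / (1 - r.δ)))

theorem tendsto_z_comp {w : E} (hw : w ∈ r.solutions ∩ r.X) {φ : ℕ → ℕ}
    (hφ : Tendsto φ atTop atTop) {x₀ : E} (hx : Tendsto (r.x ∘ φ) atTop (𝓝 x₀)) {i : ℕ}
    (hi : 1 ≤ i) (him : i ≤ m + 1) : Tendsto (fun l => r.z (φ l) i) atTop (𝓝 x₀) := by
  induction i, hi using Nat.le_induction with
  | base => simpa [Function.comp_def, r.z_one] using hx
  | succ i hi ih =>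
    simpa using (ih (by omega)).add
      ((r.tendsto_z_succ_sub_z hw (Finset.mem_Icc.2 ⟨hi, by omega⟩)).comp hφ)

theorem mem_solutions_of_tendsto_comp {w : E} (hw : w ∈ r.solutions ∩ r.X) {φ : ℕ → ℕ}
    (hφ : Tendsto φ atTop atTop) {x₀ : E} (hx : Tendsto (r.x ∘ φ) atTop (𝓝 x₀)) :
    x₀ ∈ r.solutions := by
  intro i hi
  obtain ⟨hi1, him⟩ := Finset.mem_Icc.1 hi
  have hz := r.tendsto_z_comp hw hφ hx hi1 (by omega)
  have hzJ := (r.tendsto_z_sub_J hw hi).comp hφ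
  have hJ : Tendsto (fun l => r.J (φ l) i) atTop (𝓝 x₀) := by
    simpa [Function.comp_def] using hz.sub hzJ
  have hscaled : Tendsto (fun l => (r.β (φ l))⁻¹ • (r.z (φ l) i - r.J (φ l) i)) atTop (𝓝 0) := by
    rw [tendsto_zero_iff_norm_tendsto_zero]
    refine squeeze_zero (fun _ => norm_nonneg _) (fun l => ?_)
      (by simpa using (tendsto_zero_iff_norm_tendsto_zero.1 hzJ).const_mul r.βlo⁻¹)
    rw [norm_smul, norm_inv, Real.norm_of_nonneg (r.β_pos _).le]
    exact mul_le_mul_of_nonneg_right (inv_anti₀ r.βlo_pos (r.β_mem _).1) (norm_nonneg _)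
  refine (r.maximal_B i hi).mem_of_tendsto hJ
    (by simpa using hscaled.sub (((r.continuous_A i hi).tendsto x₀).comp hz))
    (Eventually.of_forall fun l => ?_)
  rw [← inv_smul_sub_smul_sub (r.β_pos _).ne']
  exact r.J_spec (φ l) i hi

end SplittingRun

end Algorithm

theorem algorithm_main_convergence_general {n m : ℕ}
    (A : ℕ → EuclideanSpace ℝ (Fin n) → EuclideanSpace ℝ (Fin n))
    (B : ℕ → EuclideanSpace ℝ (Fin n) → Set (EuclideanSpace ℝ (Fin n)))
    (hA_cont : ∀ i ∈ Finset.Icc 1 m, Continuous (A i))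
    (hA_mono : ∀ i ∈ Finset.Icc 1 m, ∀ x y, ⟪A i x - A i y, x - y⟫ ≥ 0)
    (hB_max : ∀ i ∈ Finset.Icc 1 m, IsMaximalMonotoneOp (B i))
    (Sstar : Set (EuclideanSpace ℝ (Fin n)))
    (hSstar : Sstar = ⋂ i ∈ Finset.Icc 1 m, {x | -A i x ∈ B i x})
    (X : Set (EuclideanSpace ℝ (Fin n)))
    (hXcl : IsClosed X) (hXcv : Convex ℝ X)
    (hSX : (Sstar ∩ X).Nonempty)
    (θ δ : ℝ) (hθ : θ ∈ Set.Ioo (0 : ℝ) 1) (hδ : δ ∈ Set.Ioo (0 : ℝ) 1)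
    (βlo βhi : ℝ) (hβlo : 0 < βlo)
    (β : ℕ → ℝ) (hβ : ∀ k, β k ∈ Set.Icc βlo βhi)
    (R : ℝ)
    (x : ℕ → EuclideanSpace ℝ (Fin n))
    (z J xbar ubar : ℕ → ℕ → EuclideanSpace ℝ (Fin n))
    (α : ℕ → ℕ → ℝ)
    (p : ℕ → ℕ → EuclideanSpace ℝ (Fin n))
    (PX : EuclideanSpace ℝ (Fin n) → EuclideanSpace ℝ (Fin n))
    (hPX : ∀ w, PX w ∈ X ∧ ∀ y ∈ X, ‖PX w - w‖ ≤ ‖y - w‖)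
    (hxX : ∀ k, x k ∈ X)
    (hz1 : ∀ k, z k 1 = x k)
    (hxk1 : ∀ k, x (k + 1) = z k (m + 1))
    (hα : ∀ k, ∀ i ∈ Finset.Icc 1 m, α k i ∈ Set.Ioc (0 : ℝ) 1)
    (hJ : ∀ k, ∀ i ∈ Finset.Icc 1 m,
      (β k)⁻¹ • (z k i - β k • A i (z k i) - J k i) ∈ B i (J k i))
    (hstop : ∀ k, ∀ i ∈ Finset.Icc 1 m, z k i = J k i →
      z k (i + 1) = z k i ∧ xbar k i = z k i ∧
        ubar k i ∈ B i (z k i) ∧ ‖ubar k i‖ ≤ R)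
    (hsearch : ∀ k, ∀ i ∈ Finset.Icc 1 m, z k i ≠ J k i →
      ∃ j : ℕ, α k i = θ ^ j ∧
        xbar k i = α k i • J k i + (1 - α k i) • z k i ∧
        ubar k i ∈ B i (xbar k i) ∧ ‖ubar k i‖ ≤ R ∧
        ⟪A i (xbar k i) + ubar k i, z k i - J k i⟫ ≥
          (δ / β k) * ‖z k i - J k i‖ ^ 2 ∧
        ∀ j' < j, ∀ u ∈ B i (θ ^ j' • J k i + (1 - θ ^ j') • z k i), ‖u‖ ≤ R →
          ⟪A i (θ ^ j' • J k i + (1 - θ ^ j') • z k i) + u, z k i - J k i⟫ <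
            (δ / β k) * ‖z k i - J k i‖ ^ 2)
    (hBne : ∀ k, ∀ i ∈ Finset.Icc 1 m, ∀ j : ℕ,
      ∃ u ∈ B i (θ ^ j • J k i + (1 - θ ^ j) • z k i), ‖u‖ ≤ R)
    (hp : ∀ k, ∀ i ∈ Finset.Icc 1 m,
      p k i ∈ {y : EuclideanSpace ℝ (Fin n) |
          ⟪A i (xbar k i) + ubar k i, y - xbar k i⟫ ≤ 0} ∧
        ∀ y ∈ {y : EuclideanSpace ℝ (Fin n) |
            ⟪A i (xbar k i) + ubar k i, y - xbar k i⟫ ≤ 0},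
          ‖p k i - z k i‖ ≤ ‖y - z k i‖)
    (hznext : ∀ k, ∀ i ∈ Finset.Icc 1 m, z k (i + 1) = PX (p k i)) :
    ∃ xt ∈ Sstar ∩ X, Tendsto x atTop (nhds xt) ∧
      ∀ i ∈ Finset.Icc 1 m, -A i xt ∈ B i xt := by
  let r : SplittingRun n m := ⟨A, B, X, PX, θ, δ, βlo, βhi, β, R, x, z, J, xbar, ubar, α, p,
    hA_cont, hA_mono, hB_max, hXcv, hθ, hδ, hβlo, hβ, hPX, hz1, hxk1, hα, hJ,
    fun k i hi h => (hstop k i hi h).2, hsearch, hBne, hp, hznext⟩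
  have hS : Sstar = r.solutions := by
    rw [hSstar]
    ext w
    simp [SplittingRun.solutions, r]
  rw [hS] at hSX ⊢
  obtain ⟨w, hw⟩ := hSX
  obtain ⟨xt, -, φ, hφ, hlim⟩ := (isCompact_closedBall w ‖x 0 - w‖).tendsto_subseq
    fun k => by simpa [r, hz1] using r.z_mem_closedBall hw k le_rfl (by omega)
  have hxt : xt ∈ r.solutions ∩ r.X :=
    ⟨r.mem_solutions_of_tendsto_comp hw hφ.tendsto_atTop hlim,
      hXcl.mem_of_tendsto hlim (Eventually.of_forall fun l => hxX (φ l))⟩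
  have hfejer : Antitone fun k => dist (x k) xt := antitone_nat_of_succ_le fun k => by
    simpa [dist_eq_norm] using r.norm_x_succ_sub_le hxt k
  exact ⟨xt, hxt, tendsto_of_antitone_dist_of_tendsto_comp hfejer hlim, hxt.1⟩

theorem algorithm_main_convergence {n m : ℕ} (hm : 1 ≤ m)
    (A : ℕ → EuclideanSpace ℝ (Fin n) → EuclideanSpace ℝ (Fin n))
    (B : ℕ → EuclideanSpace ℝ (Fin n) → Set (EuclideanSpace ℝ (Fin n)))
    (hA_cont : ∀ i ∈ Finset.Icc 1 m, Continuous (A i))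
    (hA_mono : ∀ i ∈ Finset.Icc 1 m, ∀ x y, ⟪A i x - A i y, x - y⟫ ≥ 0)
    (hB_max : ∀ i ∈ Finset.Icc 1 m, IsMaximalMonotoneOp (B i))
    (Sstar : Set (EuclideanSpace ℝ (Fin n)))
    (hSstar : Sstar = ⋂ i ∈ Finset.Icc 1 m, {x | -A i x ∈ B i x})
    (X : Set (EuclideanSpace ℝ (Fin n)))
    (hXne : X.Nonempty) (hXcl : IsClosed X) (hXcv : Convex ℝ X)
    (hXdom : ∀ i ∈ Finset.Icc 1 m, ∀ x ∈ X, (B i x).Nonempty)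
    (hSX : (Sstar ∩ X).Nonempty)
    (θ δ : ℝ) (hθ : θ ∈ Set.Ioo (0 : ℝ) 1) (hδ : δ ∈ Set.Ioo (0 : ℝ) 1)
    (βlo βhi : ℝ) (hβlo : 0 < βlo) (hβle : βlo ≤ βhi)
    (β : ℕ → ℝ) (hβ : ∀ k, β k ∈ Set.Icc βlo βhi)
    (R : ℝ) (hR : 0 < R)
    (x : ℕ → EuclideanSpace ℝ (Fin n))
    (z J xbar ubar : ℕ → ℕ → EuclideanSpace ℝ (Fin n))
    (α : ℕ → ℕ → ℝ)
    (p : ℕ → ℕ → EuclideanSpace ℝ (Fin n))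
    (PX : EuclideanSpace ℝ (Fin n) → EuclideanSpace ℝ (Fin n))
    (hPX : ∀ w, PX w ∈ X ∧ ∀ y ∈ X, ‖PX w - w‖ ≤ ‖y - w‖)
    (hxX : ∀ k, x k ∈ X)
    (hzX : ∀ k, ∀ i ∈ Finset.Icc 1 (m + 1), z k i ∈ X)
    (hz1 : ∀ k, z k 1 = x k)
    (hxk1 : ∀ k, x (k + 1) = z k (m + 1))
    (hα : ∀ k, ∀ i ∈ Finset.Icc 1 m, α k i ∈ Set.Ioc (0 : ℝ) 1)
    (hJ : ∀ k, ∀ i ∈ Finset.Icc 1 m,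
      (β k)⁻¹ • (z k i - β k • A i (z k i) - J k i) ∈ B i (J k i))
    (hstop : ∀ k, ∀ i ∈ Finset.Icc 1 m, z k i = J k i →
      z k (i + 1) = z k i ∧ xbar k i = z k i ∧
        ubar k i ∈ B i (z k i) ∧ ‖ubar k i‖ ≤ R)
    (hsearch : ∀ k, ∀ i ∈ Finset.Icc 1 m, z k i ≠ J k i →
      ∃ j : ℕ, α k i = θ ^ j ∧
        xbar k i = α k i • J k i + (1 - α k i) • z k i ∧
        ubar k i ∈ B i (xbar k i) ∧ ‖ubar k i‖ ≤ R ∧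
        ⟪A i (xbar k i) + ubar k i, z k i - J k i⟫ ≥
          (δ / β k) * ‖z k i - J k i‖ ^ 2 ∧
        ∀ j' < j, ∀ u ∈ B i (θ ^ j' • J k i + (1 - θ ^ j') • z k i), ‖u‖ ≤ R →
          ⟪A i (θ ^ j' • J k i + (1 - θ ^ j') • z k i) + u, z k i - J k i⟫ <
            (δ / β k) * ‖z k i - J k i‖ ^ 2)
    (hBne : ∀ k, ∀ i ∈ Finset.Icc 1 m, ∀ j : ℕ,
      ∃ u ∈ B i (θ ^ j • J k i + (1 - θ ^ j) • z k i), ‖u‖ ≤ R)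
    (hp : ∀ k, ∀ i ∈ Finset.Icc 1 m,
      p k i ∈ {y : EuclideanSpace ℝ (Fin n) |
          ⟪A i (xbar k i) + ubar k i, y - xbar k i⟫ ≤ 0} ∧
        ∀ y ∈ {y : EuclideanSpace ℝ (Fin n) |
            ⟪A i (xbar k i) + ubar k i, y - xbar k i⟫ ≤ 0},
          ‖p k i - z k i‖ ≤ ‖y - z k i‖)
    (hznext : ∀ k, ∀ i ∈ Finset.Icc 1 m, z k (i + 1) = PX (p k i)) :
    ∃ xt ∈ Sstar ∩ X, Tendsto x atTop (nhds xt) ∧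
      ∀ i ∈ Finset.Icc 1 m, -A i xt ∈ B i xt :=
  algorithm_main_convergence_general A B hA_cont hA_mono hB_max Sstar hSstar X hXcl hXcv hSX θ δ hθ
    hδ βlo βhi hβlo β hβ R x z J xbar ubar α p PX hPX hxX hz1 hxk1 hα hJ hstop hsearch hBne hp
    hznext
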